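/- arXiv:2103.16124 — 4 statements merged into one kernel-verified Lean document; each statement's English description precedes it below -/
import Mathlib

section
/- For every positive integer N and every n ≥ 1, B_{N,n} = n! · Σ_{r=1}^{n} (-N!)^r · Σ_{i_1+⋯+i_r = n, i_j ≥ 1} 1/((N+i_1)!···(N+i_r)!). -/
/-!
Write the generating series as `dSer N 1 = 1 - g` with `g = -∑_{m ≥ 1} N! t^m / (N + m)!`.
Since `g` has no constant term, `g ^ r` only contributes to degrees `≥ r`, so the `n`-th
coefficient of `(1 - g)⁻¹` is that of the truncated geometric sum `∑_{r ≤ n} g ^ r`; the `n`-th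
coefficient of `g ^ r` is a sum over compositions of `n` into `r` positive parts.
-/

open PowerSeries Finset

noncomputable def eSer (c : ℂ) : PowerSeries ℂ := PowerSeries.mk fun n => c ^ n / n.factorial

noncomputable def dSer (N f : ℕ) : PowerSeries ℂ :=
  PowerSeries.mk fun m => (N.factorial : ℂ) * (f : ℂ) ^ m / (N + m).factorial

noncomputable def hB (N n : ℕ) : ℂ :=
  n.factorial * PowerSeries.coeff n (dSer N 1)⁻¹

noncomputable def hBP (N n : ℕ) (x : ℂ) : ℂ :=
  n.factorial * PowerSeries.coeff n (eSer x * (dSer N 1)⁻¹)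

noncomputable def gBP (N f : ℕ) (χ : DirichletCharacter ℂ f) (n : ℕ) (x : ℂ) : ℂ :=
  n.factorial * PowerSeries.coeff n
    (((f : ℂ) ^ N)⁻¹ • ((∑ a ∈ Finset.Icc 1 f, (PowerSeries.C (χ (a : ZMod f))) * eSer (x + a)) * (dSer N f)⁻¹))

noncomputable def gB (N f : ℕ) (χ : DirichletCharacter ℂ f) (n : ℕ) : ℂ := gBP N f χ n 0

namespace PowerSeries

section CommSemiring

variable {R : Type*} [CommSemiring R]

theorem coeff_pow_eq_sum_antidiagonalTuple (φ : R⟦X⟧) (r n : ℕ) :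
    coeff n (φ ^ r) = ∑ i ∈ Nat.antidiagonalTuple r n, ∏ j, coeff (i j) φ := by
  rw [← Fin.prod_const, coeff_prod]
  refine sum_equiv Finsupp.equivFunOnFinite (fun l => ?_) fun _ _ => rfl
  simp [mem_finsuppAntidiag, Nat.mem_antidiagonalTuple]

theorem coeff_pow_eq_sum_positive_antidiagonalTuple {φ : R⟦X⟧} (hφ : constantCoeff φ = 0)
    (r n : ℕ) :
    coeff n (φ ^ r) =
      ∑ i ∈ (Nat.antidiagonalTuple r n).filter (fun i => ∀ j, 1 ≤ i j), ∏ j, coeff (i j) φ := by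
  rw [coeff_pow_eq_sum_antidiagonalTuple, sum_filter_of_ne]
  intro i _ hprod j
  by_contra! hj
  refine hprod (prod_eq_zero (mem_univ j) ?_)
  rwa [Nat.lt_one_iff.mp hj, coeff_zero_eq_constantCoeff_apply]

end CommSemiring

section Field

variable {k : Type*} [Field k]

theorem coeff_inv_one_sub_eq_sum_coeff_pow {g : k⟦X⟧} (hg : constantCoeff g = 0) (n : ℕ) :
    coeff n (1 - g)⁻¹ = ∑ r ∈ range (n + 1), coeff n (g ^ r) := by
  have hunit : constantCoeff (1 - g) ≠ 0 := by simp [hg]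
  have hgeom : (1 - g)⁻¹ = ∑ r ∈ range (n + 1), g ^ r + (1 - g)⁻¹ * g ^ (n + 1) :=
    calc (1 - g)⁻¹ = (1 - g)⁻¹ * ((1 - g) * ∑ r ∈ range (n + 1), g ^ r + g ^ (n + 1)) := by
          rw [mul_neg_geom_sum, sub_add_cancel, mul_one]
      _ = ∑ r ∈ range (n + 1), g ^ r + (1 - g)⁻¹ * g ^ (n + 1) := by
          rw [mul_add, ← mul_assoc, PowerSeries.inv_mul_cancel _ hunit, one_mul]
  have htail : coeff n ((1 - g)⁻¹ * g ^ (n + 1)) = 0 :=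
    X_pow_dvd_iff.mp ((pow_dvd_pow_of_dvd (X_dvd_iff.mpr hg) _).mul_left _) n n.lt_succ_self
  rw [hgeom, map_add, htail, add_zero, map_sum]

theorem coeff_inv_one_sub_eq_sum_Icc_coeff_pow {g : k⟦X⟧} (hg : constantCoeff g = 0) {n : ℕ}
    (hn : 1 ≤ n) : coeff n (1 - g)⁻¹ = ∑ r ∈ Icc 1 n, coeff n (g ^ r) := by
  rw [coeff_inv_one_sub_eq_sum_coeff_pow hg, range_eq_Ico, sum_eq_sum_Ico_succ_bot n.succ_pos,
    pow_zero, coeff_one, if_neg (by omega), zero_add, zero_add, Nat.succ_eq_add_one,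
    Ico_add_one_right_eq_Icc]

end Field

end PowerSeries

theorem constantCoeff_one_sub_dSer_one (N : ℕ) : constantCoeff (1 - dSer N 1) = 0 := by
  rw [map_sub, constantCoeff_one, dSer, ← coeff_zero_eq_constantCoeff_apply, coeff_mk]
  simp [N.factorial_ne_zero]

theorem coeff_one_sub_dSer_one (N : ℕ) {m : ℕ} (hm : 1 ≤ m) :
    coeff m (1 - dSer N 1) = -(N.factorial : ℂ) * ((N + m).factorial : ℂ)⁻¹ := by
  simp [dSer, coeff_one, show m ≠ 0 by omega, div_eq_mul_inv]

theorem stmt1_general (N : ℕ) (n : ℕ) (hn : 1 ≤ n) :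
    hB N n = (n.factorial : ℂ) * ∑ r ∈ Finset.Icc 1 n, (-(N.factorial : ℂ)) ^ r *
      ∑ i ∈ (Finset.Nat.antidiagonalTuple r n).filter (fun i => ∀ j, 1 ≤ i j),
        ∏ j, ((N + i j).factorial : ℂ)⁻¹ := by
  have hg := constantCoeff_one_sub_dSer_one N
  rw [hB, ← sub_sub_cancel 1 (dSer N 1), coeff_inv_one_sub_eq_sum_Icc_coeff_pow hg hn]
  congr 1
  refine sum_congr rfl fun r _ => ?_
  rw [coeff_pow_eq_sum_positive_antidiagonalTuple hg, mul_sum]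
  refine sum_congr rfl fun i hi => ?_
  rw [prod_congr rfl fun j _ => coeff_one_sub_dSer_one N ((mem_filter.mp hi).2 j),
    prod_mul_distrib, prod_const, card_univ, Fintype.card_fin]

theorem stmt1 (N : ℕ) (hN : 1 ≤ N) (n : ℕ) (hn : 1 ≤ n) :
    hB N n = (n.factorial : ℂ) * ∑ r ∈ Finset.Icc 1 n, (-(N.factorial : ℂ)) ^ r *
      ∑ i ∈ (Finset.Nat.antidiagonalTuple r n).filter (fun i => ∀ j, 1 ≤ i j),
        ∏ j, ((N + i j).factorial : ℂ)⁻¹ :=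
  stmt1_general N n hn
end

section
/- For every positive integer N and n ≥ 1, B_{N,n} = n! · Σ_{r=1}^{n} binomial(n+1, r+1) · (-N!)^r · Σ_{i_1+⋯+i_r = n, i_j ≥ 0} 1/((N+i_1)!···(N+i_r)!). -/
open PowerSeries Finset

/-! The denominator `D = (t^N/N!)⁻¹ (e^t - Σ_{k<N} t^k/k!) = Σ_m N! t^m/(N+m)!` has constant
term `1`, so `1 - D` is divisible by `t` and `D⁻¹ ≡ Σ_{m ≤ n} (1 - D)^m` modulo `t^(n+1)`.
Regrouping this truncated geometric series in powers of `-D` gives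
`Σ_{m ≤ n} (1 - D)^m = Σ_{k ≤ n} C(n+1, k+1) (-D)^k`, and the `n`-th coefficient of `(-D)^k` is
`(-N!)^k Σ_{i₁+⋯+iₖ = n} ∏ 1/(N+iⱼ)!`; the term `k = 0` vanishes because `n ≥ 1`. -/

theorem sum_range_one_sub_pow {R : Type*} [CommRing R] (x : R) (n : ℕ) :
    ∑ m ∈ range (n + 1), (1 - x) ^ m =
      ∑ k ∈ range (n + 1), ((n + 1).choose (k + 1) : R) * (-x) ^ k := by
  induction n with
  | zero => simp
  | succ n ih =>
    have hbinom : (1 - x) ^ (n + 1) = ∑ k ∈ range (n + 2), ((n + 1).choose k : R) * (-x) ^ k := by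
      rw [sub_eq_neg_add, add_pow]
      exact sum_congr rfl fun k _ => by ring
    have hpascal : ∑ k ∈ range (n + 2), ((n + 2).choose (k + 1) : R) * (-x) ^ k =
        ∑ k ∈ range (n + 2), ((n + 1).choose (k + 1) : R) * (-x) ^ k +
          ∑ k ∈ range (n + 2), ((n + 1).choose k : R) * (-x) ^ k := by
      rw [← sum_add_distrib]
      exact sum_congr rfl fun k _ => by
        rw [Nat.choose_succ_succ' (n + 1), Nat.cast_add, add_mul, add_comm]
    rw [sum_range_succ, ih, hbinom, hpascal,
      sum_range_succ (fun k => ((n + 1).choose (k + 1) : R) * (-x) ^ k) (n + 1), Nat.choose_succ_self,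
      Nat.cast_zero, zero_mul, add_zero]

theorem PowerSeries.coeff_pow_eq_sum_antidiagonalTuple_s2 {R : Type*} [CommSemiring R]
    (φ : PowerSeries R) (r n : ℕ) :
    coeff n (φ ^ r) = ∑ i ∈ Nat.antidiagonalTuple r n, ∏ j, coeff (i j) φ := by
  classical
  rw [← Fin.prod_const, coeff_prod, ← piAntidiag_univ_fin_eq_antidiagonalTuple]
  exact sum_equiv Finsupp.equivFunOnFinite (fun l => by simp [mem_piAntidiag]) (fun _ _ => rfl)

theorem PowerSeries.coeff_inv_eq_coeff_sum_range_one_sub_pow {k : Type*} [Field k]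
    {φ : PowerSeries k} (hφ : constantCoeff φ = 1) (n : ℕ) :
    coeff n φ⁻¹ = coeff n (∑ m ∈ range (n + 1), (1 - φ) ^ m) := by
  have hφ0 : constantCoeff φ ≠ 0 := by simp [hφ]
  have hgeom : φ * ∑ m ∈ range (n + 1), (1 - φ) ^ m = 1 - (1 - φ) ^ (n + 1) := by
    simpa only [sub_sub_cancel] using mul_neg_geom_sum (1 - φ) (n + 1)
  have hrem : φ⁻¹ - ∑ m ∈ range (n + 1), (1 - φ) ^ m = φ⁻¹ * (1 - φ) ^ (n + 1) := by
    rw [← sub_sub_cancel 1 ((1 - φ) ^ (n + 1)), ← hgeom, mul_sub, mul_one, ← mul_assoc,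
      PowerSeries.inv_mul_cancel _ hφ0, one_mul]
  have hX : (X : PowerSeries k) ∣ 1 - φ := by rw [X_dvd_iff, map_sub, map_one, hφ, sub_self]
  rw [← sub_eq_zero, ← map_sub, hrem]
  exact X_pow_dvd_iff.mp ((pow_dvd_pow_of_dvd hX _).mul_left _) n (Nat.lt_succ_self n)

lemma constantCoeff_dSer_one (N : ℕ) : constantCoeff (dSer N 1) = 1 := by
  simp [dSer, N.factorial_ne_zero]

lemma coeff_neg_dSer_one_pow (N k n : ℕ) :
    coeff n ((-dSer N 1) ^ k) =
      (-(N.factorial : ℂ)) ^ k * ∑ i ∈ Nat.antidiagonalTuple k n, ∏ j, ((N + i j).factorial : ℂ)⁻¹ := by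
  simp only [coeff_pow_eq_sum_antidiagonalTuple_s2, mul_sum, map_neg, dSer, coeff_mk, Nat.cast_one,
    one_pow, mul_one, neg_mul_eq_neg_mul, div_eq_mul_inv, prod_mul_distrib, prod_const, card_univ,
    Fintype.card_fin]

theorem stmt2_general (N : ℕ) (n : ℕ) (hn : 1 ≤ n) :
    hB N n = (n.factorial : ℂ) * ∑ r ∈ Finset.Icc 1 n,
      ((n + 1).choose (r + 1) : ℂ) * (-(N.factorial : ℂ)) ^ r *
      ∑ i ∈ Finset.Nat.antidiagonalTuple r n, ∏ j, ((N + i j).factorial : ℂ)⁻¹ := by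
  have hterm : ∀ k, coeff n (((n + 1).choose (k + 1) : ℂ⟦X⟧) * (-dSer N 1) ^ k) =
      ((n + 1).choose (k + 1) : ℂ) * (-(N.factorial : ℂ)) ^ k *
        ∑ i ∈ Nat.antidiagonalTuple k n, ∏ j, ((N + i j).factorial : ℂ)⁻¹ := fun k => by
    rw [← map_natCast (C (R := ℂ)), coeff_C_mul, coeff_neg_dSer_one_pow, mul_assoc]
  rw [hB, coeff_inv_eq_coeff_sum_range_one_sub_pow (constantCoeff_dSer_one N),
    sum_range_one_sub_pow, map_sum]
  simp_rw [hterm]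
  refine congrArg _ (sum_subset (fun r hr => ?_) fun r hr hr' => ?_).symm
  · simp only [mem_Icc, mem_range] at hr ⊢
    omega
  · obtain rfl : r = 0 := by simp only [mem_Icc, mem_range] at *; omega
    obtain ⟨m, rfl⟩ := Nat.exists_eq_add_of_le' hn
    rw [Nat.antidiagonalTuple_zero_succ, sum_empty, mul_zero]

theorem stmt2 (N : ℕ) (hN : 1 ≤ N) (n : ℕ) (hn : 1 ≤ n) :
    hB N n = (n.factorial : ℂ) * ∑ r ∈ Finset.Icc 1 n,
      ((n + 1).choose (r + 1) : ℂ) * (-(N.factorial : ℂ)) ^ r *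
      ∑ i ∈ Finset.Nat.antidiagonalTuple r n, ∏ j, ((N + i j).factorial : ℂ)⁻¹ :=
  stmt2_general N n hn
end

section
/- Let χ be a Dirichlet character of conductor f and N a positive integer. Then B_{N,n,χ}(x) = Σ_{k=0}^{n} Σ_{l=0}^{k} binomial(n,k) · S(k,l) · (x)_l · B_{N,n-k,χ}, where S(k,l) is the Stirling number of the second kind and (x)_l = x(x-1)⋯(x-l+1) is the falling factorial. -/
open PowerSeries Finset

def stirling2 : ℕ → ℕ → ℕ
  | 0, 0 => 1
  | 0, _ + 1 => 0
  | _ + 1, 0 => 0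
  | n + 1, k + 1 => (k + 1) * stirling2 n (k + 1) + stirling2 n k

/-!
The generating function of `B_{N,n,χ}(x)` is `e^{xt}` times that of `B_{N,n,χ}`, so these
polynomials form an Appell sequence: `B_{N,n,χ}(x) = ∑ₖ (n choose k) xᵏ B_{N,n-k,χ}`.
Expanding `xᵏ = ∑ₗ S(k,l) (x)ₗ` in falling factorials gives the formula.
-/

theorem stirling2_eq_stirlingSecond : stirling2 = Nat.stirlingSecond := by
  funext n k
  induction n generalizing k with
  | zero => cases k <;> rfl
  | succ n ih =>
    cases k with
    | zero => rfl
    | succ k => rw [stirling2, Nat.stirlingSecond_succ_succ, ih, ih]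

section FallingFactorial

open Polynomial

theorem X_pow_eq_sum_stirlingSecond_mul_descPochhammer (R : Type*) [CommRing R] (n : ℕ) :
    (Polynomial.X : R[X]) ^ n =
      ∑ l ∈ range (n + 1), (Nat.stirlingSecond n l : R[X]) * descPochhammer R l := by
  induction n with
  | zero => simp
  | succ n ih =>
    set g : ℕ → R[X] := fun l => l * Nat.stirlingSecond n l * descPochhammer R l
    have recurrence (l : ℕ) :
        (Nat.stirlingSecond (n + 1) (l + 1) : R[X]) * descPochhammer R (l + 1) =
          Nat.stirlingSecond n l * descPochhammer R (l + 1) + g (l + 1) := by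
      simp only [g, Nat.stirlingSecond_succ_succ]
      push_cast
      ring
    have sum_g_succ : ∑ l ∈ range (n + 1), g (l + 1) = ∑ l ∈ range (n + 1), g l := by
      calc ∑ l ∈ range (n + 1), g (l + 1)
          = ∑ l ∈ range (n + 1), g (l + 1) + g 0 := by simp [g]
        _ = ∑ l ∈ range (n + 1 + 1), g l := (sum_range_succ' g (n + 1)).symm
        _ = ∑ l ∈ range (n + 1), g l := by
          simp [sum_range_succ, g, Nat.stirlingSecond_eq_zero_of_lt (Nat.lt_succ_self n)]
    rw [pow_succ', ih, mul_sum, sum_range_succ' _ (n + 1), sum_congr rfl fun l _ => recurrence l,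
      sum_add_distrib, sum_g_succ, ← sum_add_distrib]
    simp only [Nat.stirlingSecond_succ_zero, Nat.cast_zero, zero_mul, add_zero]
    refine sum_congr rfl fun l _ => ?_
    simp only [g, descPochhammer_succ_right]
    ring

theorem pow_eq_sum_stirlingSecond_mul_prod_sub {R : Type*} [CommRing R] (n : ℕ) (x : R) :
    x ^ n = ∑ l ∈ range (n + 1), (Nat.stirlingSecond n l : R) * ∏ j ∈ range l, (x - j) := by
  have := congr_arg (eval x) (X_pow_eq_sum_stirlingSecond_mul_descPochhammer R n)
  simpa [eval_finsetSum, descPochhammer_eval_eq_prod_range] using this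

end FallingFactorial

theorem eSer_eq_rescale_exp (c : ℂ) : eSer c = rescale c (exp ℂ) := by
  ext n
  simp [eSer, coeff_rescale, coeff_exp, div_eq_mul_inv, mul_comm]

theorem eSer_add (x a : ℂ) : eSer (x + a) = eSer x * eSer a := by
  simp only [eSer_eq_rescale_exp, exp_mul_exp_eq_exp_add]

theorem factorial_mul_coeff_eSer_mul (x : ℂ) (G : ℂ⟦X⟧) (n : ℕ) :
    n.factorial * coeff n (eSer x * G) =
      ∑ k ∈ range (n + 1), n.choose k * x ^ k * ((n - k).factorial * coeff (n - k) G) := by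
  rw [coeff_mul, Nat.sum_antidiagonal_eq_sum_range_succ_mk, mul_sum]
  refine sum_congr rfl fun k hk => ?_
  have hkn : k ≤ n := Nat.lt_succ_iff.mp (mem_range.mp hk)
  have hk : (k.factorial : ℂ) ≠ 0 := Nat.cast_ne_zero.2 k.factorial_ne_zero
  have hnk : ((n - k).factorial : ℂ) ≠ 0 := Nat.cast_ne_zero.2 (n - k).factorial_ne_zero
  simp only [eSer, coeff_mk, Nat.cast_choose ℂ hkn]
  field_simp

noncomputable def gBPSeries (N f : ℕ) (χ : DirichletCharacter ℂ f) (x : ℂ) : ℂ⟦X⟧ :=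
  ((f : ℂ) ^ N)⁻¹ •
    ((∑ a ∈ Icc 1 f, C (χ (a : ZMod f)) * eSer (x + a)) * (dSer N f)⁻¹)

theorem gBPSeries_eq_eSer_mul (N f : ℕ) (χ : DirichletCharacter ℂ f) (x : ℂ) :
    gBPSeries N f χ x = eSer x * gBPSeries N f χ 0 := by
  simp only [gBPSeries, zero_add, eSer_add, mul_smul_comm, ← mul_assoc, mul_sum,
    mul_comm (C _) (eSer x)]

theorem gBP_eq_sum_choose_mul_pow_mul_gB (N f : ℕ) (χ : DirichletCharacter ℂ f) (n : ℕ)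
    (x : ℂ) :
    gBP N f χ n x = ∑ k ∈ range (n + 1), n.choose k * x ^ k * gB N f χ (n - k) := by
  change n.factorial * coeff n (gBPSeries N f χ x) = _
  rw [gBPSeries_eq_eSer_mul, factorial_mul_coeff_eSer_mul]
  rfl

theorem stmt10_general (N f : ℕ) (χ : DirichletCharacter ℂ f) (n : ℕ) (x : ℂ) :
    gBP N f χ n x = ∑ k ∈ Finset.range (n + 1), ∑ l ∈ Finset.range (k + 1),
      (n.choose k : ℂ) * (stirling2 k l : ℂ) * (∏ j ∈ Finset.range l, (x - (j : ℂ))) *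
        gB N f χ (n - k) := by
  rw [gBP_eq_sum_choose_mul_pow_mul_gB, stirling2_eq_stirlingSecond]
  refine sum_congr rfl fun k _ => ?_
  rw [pow_eq_sum_stirlingSecond_mul_prod_sub, mul_sum, sum_mul]
  exact sum_congr rfl fun l _ => by ring

theorem stmt10 (N f : ℕ) (hN : 1 ≤ N) (hf : 0 < f) (χ : DirichletCharacter ℂ f)
    (hχ : χ.IsPrimitive) (n : ℕ) (x : ℂ) :
    gBP N f χ n x = ∑ k ∈ Finset.range (n + 1), ∑ l ∈ Finset.range (k + 1),
      (n.choose k : ℂ) * (stirling2 k l : ℂ) * (∏ j ∈ Finset.range l, (x - (j : ℂ))) *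
        gB N f χ (n - k) :=
  stmt10_general N f χ n x
end

section
/- Let χ be a Dirichlet character of conductor f, N ≥ 1, and S_n = Σ_{a=1}^{f} χ(a) a^n. Then for n ≥ 1: binomial(N+n, n)^{-1} · Σ_{i=0}^{n} binomial(N+n, i) · B_{N,i,χ} · f^{N+n-i} = S_n. -/
open PowerSeries Finset

/-! Multiplying the defining identity of `gB` by `f ^ N · D(ft)` gives
`Σ χ(a) e^{at} = f^N (Σ B_{N,i,χ} tⁱ/i!) D(ft)`, where `D(ft) = Σ N! (ft)^m / (N+m)!` is the
normalized denominator. Comparing the coefficients of `tⁿ` and using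
`n! N! / (i! (N+n-i)!) = C(N+n, i) / C(N+n, n)` gives the identity. -/

lemma coeff_dSer (N f m : ℕ) :
    coeff m (dSer N f) = (N.factorial : ℂ) * (f : ℂ) ^ m / (N + m).factorial :=
  coeff_mk _ _

lemma constantCoeff_dSer (N f : ℕ) : constantCoeff (dSer N f) = 1 := by
  simp [← coeff_zero_eq_constantCoeff_apply, coeff_dSer, Nat.factorial_ne_zero]

noncomputable def charExpSum (f : ℕ) (χ : DirichletCharacter ℂ f) : PowerSeries ℂ :=
  ∑ a ∈ Icc 1 f, C (χ (a : ZMod f)) * eSer a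

lemma coeff_charExpSum (f : ℕ) (χ : DirichletCharacter ℂ f) (n : ℕ) :
    coeff n (charExpSum f χ) = (∑ a ∈ Icc 1 f, χ (a : ZMod f) * (a : ℂ) ^ n) / n.factorial := by
  simp [charExpSum, eSer, coeff_C_mul, sum_div, mul_div_assoc]

lemma mk_gB_div_factorial (N f : ℕ) (χ : DirichletCharacter ℂ f) :
    mk (fun i => gB N f χ i / i.factorial) =
      ((f : ℂ) ^ N)⁻¹ • (charExpSum f χ * (dSer N f)⁻¹) := by
  ext i
  simp [gB, gBP, charExpSum, Nat.factorial_ne_zero]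

lemma charExpSum_eq_smul_mk_gB_mul_dSer (N : ℕ) {f : ℕ} (hf : f ≠ 0) (χ : DirichletCharacter ℂ f) :
    charExpSum f χ = ((f : ℂ) ^ N) • mk (fun i => gB N f χ i / i.factorial) * dSer N f := by
  have hfN : ((f : ℂ) ^ N) ≠ 0 := pow_ne_zero _ (Nat.cast_ne_zero.mpr hf)
  rw [mk_gB_div_factorial, smul_smul, mul_inv_cancel₀ hfN, one_smul,
    eq_mul_inv_iff_mul_eq (by simp [constantCoeff_dSer]) |>.mp rfl]

lemma choose_div_choose_eq {K : Type*} [Field K] [CharZero K] {N n i : ℕ} (hi : i ≤ n) :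
    ((N + n).choose i : K) / (N + n).choose n =
      n.factorial * N.factorial / (i.factorial * (N + (n - i)).factorial) := by
  rw [Nat.cast_choose K (by omega : i ≤ N + n), Nat.cast_choose K (by omega : n ≤ N + n),
    show N + n - i = N + (n - i) by omega, show N + n - n = N by omega]
  have : ((N + n).factorial : K) ≠ 0 := Nat.cast_ne_zero.mpr (Nat.factorial_ne_zero _)
  field_simp

theorem stmt12_general (N f : ℕ) (hf : 0 < f) (χ : DirichletCharacter ℂ f)
    (n : ℕ) :
    (((N + n).choose n : ℂ))⁻¹ *
      ∑ i ∈ Finset.range (n + 1), ((N + n).choose i : ℂ) * gB N f χ i * (f : ℂ) ^ (N + n - i) =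
    ∑ a ∈ Finset.Icc 1 f, χ (a : ZMod f) * (a : ℂ) ^ n := by
  have hcoeff := congrArg (coeff n) (charExpSum_eq_smul_mk_gB_mul_dSer N hf.ne' χ)
  rw [coeff_charExpSum, div_eq_iff (Nat.cast_ne_zero.mpr n.factorial_ne_zero), coeff_mul,
    Nat.sum_antidiagonal_eq_sum_range_succ_mk, sum_mul] at hcoeff
  rw [hcoeff, mul_sum]
  refine sum_congr rfl fun i hi => ?_
  have hin : i ≤ n := Nat.lt_succ_iff.mp (mem_range.mp hi)
  rw [inv_mul_eq_div, mul_assoc, mul_div_right_comm, choose_div_choose_eq hin,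
    show N + n - i = N + (n - i) by omega, pow_add]
  simp only [coeff_smul, coeff_mk, coeff_dSer, smul_eq_mul]
  field_simp

theorem stmt12 (N f : ℕ) (hN : 1 ≤ N) (hf : 0 < f) (χ : DirichletCharacter ℂ f)
    (hχ : χ.IsPrimitive) (n : ℕ) (hn : 1 ≤ n) :
    (((N + n).choose n : ℂ))⁻¹ *
      ∑ i ∈ Finset.range (n + 1), ((N + n).choose i : ℂ) * gB N f χ i * (f : ℂ) ^ (N + n - i) =
    ∑ a ∈ Finset.Icc 1 f, χ (a : ZMod f) * (a : ℂ) ^ n :=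
  stmt12_general N f hf χ n
end
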